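/- Let y, p, β, M be real numbers with 0 ≤ y ≤ M, 0 < p ≤ 1, and 0 ≤ β ≤ 1/M. Let I be a Bernoulli random variable with P(I = 1) = p. Then E[exp(β·y − β·y·I/p)] ≤ 1 + β²·y²/p, and consequently E[exp(β·y − β·(β·M² + y·I)/p)] ≤ (1 + β²·y²/p)·exp(−β²·M²/p) ≤ 1. -/

import Mathlib

open MeasureTheory

lemma exp_le_quad {x : ℝ} (hx : x ≤ 1) : Real.exp x ≤ 1 + x + x ^ 2 := by
  rcases le_or_gt x 0 with h | h
  · have h1 : 0 < 1 - x := by linarith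
    have h2 : 1 - x ≤ Real.exp (-x) := by
      have := Real.add_one_le_exp (-x); linarith
    have h3 : Real.exp x ≤ (1 - x)⁻¹ := by
      rw [show Real.exp x = (Real.exp (-x))⁻¹ by rw [← Real.exp_neg, neg_neg]]
      exact inv_anti₀ h1 h2
    refine h3.trans ?_
    rw [inv_le_iff_one_le_mul₀ h1]
    nlinarith
  · calc Real.exp x ≤ _ := Real.exp_bound' h.le hx zero_lt_three
      _ ≤ 1 + x + x ^ 2 := by
        erw [Finset.sum_range_succ]
        repeat rw [Finset.sum_range_succ]
        norm_num [Nat.factorial]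
        nlinarith

theorem ipw_moment_bound {Ω : Type*} [MeasurableSpace Ω] (μ : Measure Ω) [IsProbabilityMeasure μ]
    (y p β M : ℝ) (hy0 : 0 ≤ y) (hyM : y ≤ M) (hp0 : 0 < p) (hp1 : p ≤ 1)
    (hβ0 : 0 ≤ β) (hβM : β ≤ 1 / M)
    (I : Ω → ℝ) (hI : Measurable I) (hI01 : ∀ ω, I ω = 0 ∨ I ω = 1)
    (hIp : ∫ ω, I ω ∂μ = p) :
    (∫ ω, Real.exp (β * y - β * y * I ω / p) ∂μ ≤ 1 + β ^ 2 * y ^ 2 / p) ∧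
    (∫ ω, Real.exp (β * y - β * (β * M ^ 2 + y * I ω) / p) ∂μ
        ≤ (1 + β ^ 2 * y ^ 2 / p) * Real.exp (-(β ^ 2 * M ^ 2 / p))) ∧
    ((1 + β ^ 2 * y ^ 2 / p) * Real.exp (-(β ^ 2 * M ^ 2 / p)) ≤ 1) := by
  have hM0 : 0 ≤ M := hy0.trans hyM
  set z : ℝ := β * y with hz
  have hz0 : 0 ≤ z := mul_nonneg hβ0 hy0
  have hz1 : z ≤ 1 := by
    rcases eq_or_lt_of_le hM0 with h | h
    · have hyz : y = 0 := le_antisymm (h ▸ hyM) hy0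
      simp [hz, hyz]
    · have hβM1 : β * M ≤ 1 := by
        have := (le_div_iff₀ h).mp hβM
        linarith
      nlinarith
  -- integrability of I
  have hIint : Integrable I μ := by
    refine ⟨hI.aestronglyMeasurable, ?_⟩
    apply HasFiniteIntegral.of_bounded (C := 1)
    filter_upwards with ω
    rcases hI01 ω with h | h <;> simp [h]
  -- pointwise rewrite
  have hpt : ∀ ω, Real.exp (β * y - β * y * I ω / p)
      = Real.exp z + (Real.exp (z - z / p) - Real.exp z) * I ω := by
    intro ω
    rcases hI01 ω with h | h
    · simp [h, hz]
    · rw [h, hz]; ring_nf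
  have hint : ∫ ω, Real.exp (β * y - β * y * I ω / p) ∂μ
      = (1 - p) * Real.exp z + p * Real.exp (z - z / p) := by
    simp_rw [hpt]
    rw [integral_add (integrable_const _) (hIint.const_mul _),
      integral_const, integral_const_mul, hIp]
    simp; ring
  -- key scalar inequality
  have key : (1 - p) * Real.exp z + p * Real.exp (z - z / p) ≤ 1 + z ^ 2 / p := by
    have h1 : Real.exp z ≤ 1 + z + z ^ 2 := exp_le_quad hz1
    have hle : z - z / p ≤ 0 := by
      have : z ≤ z / p := by
        rw [le_div_iff₀ hp0]; nlinarith
      linarith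
    have h2 : Real.exp (z - z / p) ≤ 1 + (z - z / p) + (z - z / p) ^ 2 :=
      exp_le_quad (by linarith)
    have hp' : (0:ℝ) < p := hp0
    have hexp1 : (1 - p) * Real.exp z ≤ (1 - p) * (1 + z + z ^ 2) := by
      apply mul_le_mul_of_nonneg_left h1 (by linarith)
    have hexp2 : p * Real.exp (z - z / p) ≤ p * (1 + (z - z / p) + (z - z / p) ^ 2) := by
      apply mul_le_mul_of_nonneg_left h2 hp0.le
    have hexpand : (1 - p) * (1 + z + z ^ 2) + p * (1 + (z - z / p) + (z - z / p) ^ 2)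
        = 1 + z ^ 2 * (1 / p - 1) := by
      field_simp
      ring
    have : z ^ 2 * (1 / p - 1) ≤ z ^ 2 / p := by
      have : z ^ 2 * (1 / p - 1) = z ^ 2 / p - z ^ 2 := by ring
      nlinarith [sq_nonneg z]
    linarith
  have part1 : ∫ ω, Real.exp (β * y - β * y * I ω / p) ∂μ ≤ 1 + β ^ 2 * y ^ 2 / p := by
    rw [hint]
    calc (1 - p) * Real.exp z + p * Real.exp (z - z / p) ≤ 1 + z ^ 2 / p := key
      _ = 1 + β ^ 2 * y ^ 2 / p := by rw [hz]; ring_nf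
  refine ⟨part1, ?_, ?_⟩
  · have hpt2 : ∀ ω, Real.exp (β * y - β * (β * M ^ 2 + y * I ω) / p)
        = Real.exp (β * y - β * y * I ω / p) * Real.exp (-(β ^ 2 * M ^ 2 / p)) := by
      intro ω
      rw [← Real.exp_add]
      congr 1
      field_simp
      ring
    simp_rw [hz, hpt2]
    rw [integral_mul_const]
    apply mul_le_mul_of_nonneg_right part1 (Real.exp_nonneg _)
  · have hc : 0 ≤ β ^ 2 * M ^ 2 / p := by positivity
    have h1 : 1 + β ^ 2 * y ^ 2 / p ≤ Real.exp (β ^ 2 * M ^ 2 / p) := by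
      have hyy : β ^ 2 * y ^ 2 / p ≤ β ^ 2 * M ^ 2 / p := by
        gcongr <;> first | exact hp0.le | exact hy0 | exact hyM
      have := Real.add_one_le_exp (β ^ 2 * M ^ 2 / p)
      linarith
    calc (1 + β ^ 2 * y ^ 2 / p) * Real.exp (-(β ^ 2 * M ^ 2 / p))
        ≤ Real.exp (β ^ 2 * M ^ 2 / p) * Real.exp (-(β ^ 2 * M ^ 2 / p)) := by
          apply mul_le_mul_of_nonneg_right h1 (Real.exp_nonneg _)
      _ = 1 := by rw [← Real.exp_add]; simp
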